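/- Let R be an SRS over Σ_A. The string rewrite relation →_{shift(R)} is terminating if and only if the cycle rewrite relation ∘→_R is terminating (i.e., the transformation shift is sound and complete). -/

import Mathlib

/-!
Soundness: a cycle step on `[x]` is simulated from `B x E`. Rule `shiftA` creates `N` markers `M`,
each of which lets `shiftC`, `shiftD`, `shiftE` move one letter from the front of `x` to its end;
rotating by fewer than `len(R)` letters brings any redex into one piece, and `shiftF`–`shiftJ`
then walk to it, rewrite it and return to `B`.

Completeness: give the fresh symbols arrow types (`W : start → marks`, `M : marks → marks`, ...)
and cut a string of `shift(R)` wherever adjacent types do not match. Each segment decodes to a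
cyclic word over `Σ_A`. A `shiftH` step performs a cycle step in one segment and leaves the others
unchanged up to rotation; every other step changes the decoded words only up to rotation or
removes a segment, and it decreases a lexicographic weight. Hence an infinite `shift(R)`-reduction
contains infinitely many `shiftH` steps, the number of segments eventually stays constant, and
one segment undergoes infinitely many cycle steps.
-/

namespace CycleRewriting

/-- A binary relation is terminating if there is no infinite reduction sequence. -/
def Terminating {beta : Type*} (r : beta → beta → Prop) : Prop :=
  ¬ ∃ f : ℕ → beta, ∀ n : ℕ, r (f n) (f (n + 1))

/-- `r₁` is terminating relative to `r₂` iff every infinite `r₂`-sequence contains only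
finitely many `r₁`-steps. -/
def RelTerminating {beta : Type*} (r₁ r₂ : beta → beta → Prop) : Prop :=
  ¬ ∃ f : ℕ → beta, (∀ n : ℕ, r₂ (f n) (f (n + 1))) ∧
      {n : ℕ | r₁ (f n) (f (n + 1))}.Infinite

/-- The string rewrite relation of an SRS `R`. -/
def Step {α : Type*} (R : Set (List α × List α)) (x y : List α) : Prop :=
  ∃ u v l r, (l, r) ∈ R ∧ x = u ++ l ++ v ∧ y = u ++ r ++ v

/-- The prefix rewrite relation of an SRS `R`. -/
def PrefixStep {α : Type*} (R : Set (List α × List α)) (x y : List α) : Prop :=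
  ∃ l r w, (l, r) ∈ R ∧ x = l ++ w ∧ y = r ++ w

/-- The rotation equivalence `u ~ v` iff `u = w₁w₂` and `v = w₂w₁`. -/
def Sim {α : Type*} (u v : List α) : Prop :=
  ∃ w₁ w₂, u = w₁ ++ w₂ ∧ v = w₂ ++ w₁

/-- The cycle rewrite relation of an SRS `R` (on representatives of `Sim`-classes):
`[u] ∘→_R [v]` iff there are a rule `(l, r) ∈ R` and `w` with `l ++ w ∈ [u]` and
`r ++ w ∈ [v]`. -/
def CycleStep {α : Type*} (R : Set (List α × List α)) (x y : List α) : Prop :=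
  ∃ l r w, (l, r) ∈ R ∧ Sim (l ++ w) x ∧ Sim (r ++ w) y

/-- The shift relation `↷`: move the first symbol of a string to its end. -/
def Rot {α : Type*} (u v : List α) : Prop :=
  ∃ a w, u = a :: w ∧ v = w ++ [a]

/-- `k`-fold composition of a relation. -/
def RelPow {beta : Type*} (r : beta → beta → Prop) : ℕ → beta → beta → Prop
  | 0 => Eq
  | n + 1 => Relation.Comp r (RelPow r n)

/-- `lenSRS R` is the maximal length of a left-hand side of a rule of `R`. -/
noncomputable def lenSRS {α : Type*} (R : Set (List α × List α)) : ℕ :=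
  sSup ((fun p : List α × List α => p.1.length) '' R)

/-- The alphabet of `shift R`: the original alphabet `Σ_A`, two fresh copies `Σ_B`,
`Σ_C`, and the fresh symbols `B`, `E`, `W`, `V`, `M`, `L`, `R`, `D`. -/
inductive ShiftSym (α : Type*) where
  | ca : α → ShiftSym α          -- Σ_A
  | cb : α → ShiftSym α          -- Σ_B
  | cc : α → ShiftSym α          -- Σ_C
  | symB : ShiftSym α
  | symE : ShiftSym α
  | symW : ShiftSym α
  | symV : ShiftSym α
  | symM : ShiftSym α
  | symL : ShiftSym α
  | symR : ShiftSym α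
  | symD : ShiftSym α

open ShiftSym in
/-- The transformation `shift`, with `N = max (0, lenSRS R - 1)`. -/
noncomputable def shiftSRS {α : Type*} (R : Set (List α × List α)) :
    Set (List (ShiftSym α) × List (ShiftSym α)) :=
  { p | p = ([symB], symW :: List.replicate (lenSRS R - 1) symM ++ [symV]) ∨  -- shiftA
        p = ([symM], []) ∨                                                    -- shiftB
        (∃ a : α, p = ([symM, symV, ca a], [symV, cb a])) ∨                   -- shiftC
        (∃ a b : α, p = ([cb b, ca a], [ca a, cb b])) ∨                       -- shiftD
        (∃ b : α, p = ([cb b, symE], [ca b, symE])) ∨                         -- shiftE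
        p = ([symW, symV], [symR, symL]) ∨                                    -- shiftF
        (∃ a : α, p = ([symL, ca a], [cc a, symL])) ∨                         -- shiftG
        (∃ l r, (l, r) ∈ R ∧ p = (symL :: l.map ca, symD :: r.map ca)) ∨      -- shiftH
        (∃ c : α, p = ([cc c, symD], [symD, ca c])) ∨                         -- shiftI
        p = ([symR, symD], [symB]) }                                          -- shiftJ

section Termination

open Relation Filter

variable {β γ : Type*}

theorem terminating_iff_wellFounded_flip {r : β → β → Prop} :
    Terminating r ↔ WellFounded (flip r) := by
  simp [Terminating, wellFounded_iff_isEmpty_descending_chain, isEmpty_subtype, flip]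

theorem Terminating.transGen {r : β → β → Prop} (h : Terminating r) :
    Terminating (TransGen r) := by
  rw [terminating_iff_wellFounded_flip] at h ⊢
  convert h.transGen using 1
  ext a b
  exact transGen_swap.symm

theorem Terminating.of_simulation {r : β → β → Prop} {r' : γ → γ → Prop} (h : Terminating r')
    (E : β → γ → Prop) (hE : ∀ a, ∃ x, E a x)
    (sim : ∀ {a b x}, r a b → E a x → ∃ y, r' x y ∧ E b y) : Terminating r := by
  rintro ⟨f, hf⟩
  suffices ∀ x n, E (f n) x → False by
    obtain ⟨x, hx⟩ := hE (f 0)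
    exact this x 0 hx
  intro x
  induction x using (terminating_iff_wellFounded_flip.1 h).induction with
  | _ x ih =>
    intro n hx
    obtain ⟨y, hxy, hy⟩ := sim (hf n) hx
    exact ih y hxy (n + 1) hy

theorem not_terminating_of_frequently {S C : β → β → Prop} [IsPreorder β S]
    (hSC : ∀ {a b c}, S a b → C b c → C a c) {g : ℕ → β}
    (hg : ∀ᶠ n in atTop, S (g n) (g (n + 1)) ∨ C (g n) (g (n + 1)))
    (hC : ∃ᶠ n in atTop, C (g n) (g (n + 1))) : ¬ Terminating C := by
  classical
  obtain ⟨N, hN⟩ := eventually_atTop.1 hg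
  intro hterm
  suffices ∀ x n, N ≤ n → S x (g n) → False from this (g N) N le_rfl (refl_of S _)
  intro x
  induction x using (terminating_iff_wellFounded_flip.1 hterm).induction with
  | _ x ih =>
    intro n hn hxn
    have hnext : ∃ m, n ≤ m ∧ C (g m) (g (m + 1)) := frequently_atTop.1 hC n
    obtain ⟨hnm, hCm⟩ := Nat.find_spec hnext
    have hS : ∀ k, n ≤ k → k ≤ Nat.find hnext → S (g n) (g k) := by
      intro k hnk
      induction k, hnk using Nat.le_induction with
      | base => exact fun _ => refl_of S _
      | succ k hnk ihk =>
        intro hk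
        have hnotC : ¬ C (g k) (g (k + 1)) := fun hc => Nat.find_min hnext hk ⟨hnk, hc⟩
        exact trans_of S (ihk (Nat.le_of_succ_le hk)) ((hN k (by omega)).resolve_right hnotC)
    exact ih _ (hSC (trans_of S hxn (hS _ hnm le_rfl)) hCm) _ (by omega) (refl_of S _)

theorem forall₂_getD {r : β → γ → Prop} {l₁ : List β} {l₂ : List γ} (h : List.Forall₂ r l₁ l₂)
    {j : ℕ} (hj : j < l₁.length) (d₁ : β) (d₂ : γ) : r (l₁.getD j d₁) (l₂.getD j d₂) := by
  rw [List.getD_eq_getElem _ _ hj, List.getD_eq_getElem _ _ (h.length_eq ▸ hj)]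
  exact h.get hj _

theorem not_terminating_of_listwise [Inhabited β] {S C : β → β → Prop} [IsPreorder β S]
    (hSC : ∀ {a b c}, S a b → C b c → C a c) {w : ℕ → List β}
    (hw : ∀ n, List.Forall₂ (fun a b => S a b ∨ C a b) (w n) (w (n + 1)) ∨
      (w (n + 1)).length < (w n).length)
    (hC : ∃ᶠ n in atTop, ∃ j < (w n).length,
      C ((w n).getD j default) ((w (n + 1)).getD j default)) :
    ¬ Terminating C := by
  obtain ⟨N, hN⟩ := WellFoundedLT.antitone_chain_condition (f := fun n => (w n).length)
    (antitone_nat_of_succ_le fun n => (hw n).elim (fun h => h.length_eq.ge) le_of_lt)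
  have hstep : ∀ n ≥ N, List.Forall₂ (fun a b => S a b ∨ C a b) (w n) (w (n + 1)) := by
    intro n hn
    have h₁ := hN n hn
    have h₂ := hN (n + 1) (by omega)
    exact (hw n).resolve_right (by omega)
  obtain ⟨j, hj, hCj⟩ : ∃ j < (w N).length, ∃ᶠ n in atTop,
      C ((w n).getD j default) ((w (n + 1)).getD j default) := by
    by_contra! hnone
    have hall := (eventually_all_finset (Finset.range (w N).length)).2
      fun j hj => hnone j (Finset.mem_range.1 hj)
    obtain ⟨n, ⟨j, hjn, hCn⟩, hnot, hnN⟩ :=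
      (hC.and_eventually (hall.and (eventually_ge_atTop N))).exists
    exact hnot j (Finset.mem_range.2 (hN n hnN ▸ hjn)) hCn
  refine not_terminating_of_frequently hSC (g := fun n => (w n).getD j default) ?_ hCj
  filter_upwards [eventually_ge_atTop N] with n hn
  exact forall₂_getD (hstep n hn) (hN n hn ▸ hj) _ _

end Termination

section Rewriting

variable {γ : Type*} {R : Set (List γ × List γ)}

theorem sim_refl (u : List γ) : Sim u u := ⟨u, [], by simp, by simp⟩

theorem sim_append_comm (u v : List γ) : Sim (u ++ v) (v ++ u) := ⟨u, v, rfl, rfl⟩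

theorem Sim.symm {u v : List γ} (h : Sim u v) : Sim v u := by
  obtain ⟨a, b, rfl, rfl⟩ := h
  exact sim_append_comm b a

theorem Sim.trans {u v w : List γ} (h₁ : Sim u v) (h₂ : Sim v w) : Sim u w := by
  obtain ⟨a, b, rfl, rfl⟩ := h₁
  obtain ⟨c, d, hcd, rfl⟩ := h₂
  rcases List.append_eq_append_iff.1 hcd with ⟨e, rfl, rfl⟩ | ⟨e, rfl, rfl⟩
  · exact ⟨e, d ++ b, by simp, by simp⟩
  · exact ⟨a ++ c, e, by simp, by simp⟩

instance : IsPreorder (List γ) Sim where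
  refl := sim_refl
  trans _ _ _ := Sim.trans

theorem CycleStep.sim_left {x x' y : List γ} (hx : Sim x' x) (h : CycleStep R x y) :
    CycleStep R x' y := by
  obtain ⟨l, r, w, hm, h₁, h₂⟩ := h
  exact ⟨l, r, w, hm, h₁.trans hx.symm, h₂⟩

theorem step_of_mem {l r : List γ} (hm : (l, r) ∈ R) (u v : List γ) :
    Step R (u ++ l ++ v) (u ++ r ++ v) :=
  ⟨u, v, l, r, hm, rfl, rfl⟩

theorem Step.append_context {x y : List γ} (h : Step R x y) (a b : List γ) :
    Step R (a ++ x ++ b) (a ++ y ++ b) := by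
  obtain ⟨u, v, l, r, hm, rfl, rfl⟩ := h
  simpa using step_of_mem hm (a ++ u) (v ++ b)

theorem reflTransGen_step_context {x y : List γ} (h : Relation.ReflTransGen (Step R) x y)
    (a b : List γ) : Relation.ReflTransGen (Step R) (a ++ x ++ b) (a ++ y ++ b) :=
  h.lift (fun z => a ++ z ++ b) fun _ _ hs => hs.append_context a b

theorem Step.cycleStep {x y : List γ} (h : Step R x y) : CycleStep R x y := by
  obtain ⟨u, v, l, r, hm, rfl, rfl⟩ := h
  refine ⟨l, r, v ++ u, hm, ?_, ?_⟩
  · simpa using sim_append_comm (l ++ v) u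
  · simpa using sim_append_comm (r ++ v) u

end Rewriting

section Soundness

open Relation ShiftSym List

variable {α : Type*} {R : Set (List α × List α)}

local infix:50 " ⇝* " => ReflTransGen (Step (shiftSRS R))

def encode (p : List α) : List (ShiftSym α) := symB :: p.map ca ++ [symE]

theorem shiftA_mem : ([symB], symW :: replicate (lenSRS R - 1) symM ++ [symV]) ∈ shiftSRS R := by
  simp [shiftSRS]
theorem shiftB_mem : (([symM], []) : List (ShiftSym α) × _) ∈ shiftSRS R := by simp [shiftSRS]
theorem shiftC_mem (a : α) : ([symM, symV, ca a], [symV, cb a]) ∈ shiftSRS R := by simp [shiftSRS]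
theorem shiftD_mem (a b : α) : ([cb b, ca a], [ca a, cb b]) ∈ shiftSRS R := by simp [shiftSRS]
theorem shiftE_mem (b : α) : ([cb b, symE], [ca b, symE]) ∈ shiftSRS R := by simp [shiftSRS]
theorem shiftF_mem : (([symW, symV], [symR, symL]) : List (ShiftSym α) × _) ∈ shiftSRS R := by
  simp [shiftSRS]
theorem shiftG_mem (a : α) : ([symL, ca a], [cc a, symL]) ∈ shiftSRS R := by simp [shiftSRS]
theorem shiftH_mem {l r : List α} (hm : (l, r) ∈ R) :
    (symL :: l.map ca, symD :: r.map ca) ∈ shiftSRS R := by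
  simpa [shiftSRS] using ⟨l, r, hm, rfl, rfl⟩
theorem shiftI_mem (c : α) : ([cc c, symD], [symD, ca c]) ∈ shiftSRS R := by simp [shiftSRS]
theorem shiftJ_mem : (([symR, symD], [symB]) : List (ShiftSym α) × _) ∈ shiftSRS R := by
  simp [shiftSRS]

theorem replicate_symM_reduce {k n : ℕ} (h : k ≤ n) (t : List (ShiftSym α)) :
    replicate n symM ++ t ⇝* replicate k symM ++ t := by
  induction n, h using Nat.le_induction with
  | base => rfl
  | succ n _ ih =>
    refine ReflTransGen.head ?_ ih
    simpa [replicate_succ] using step_of_mem (shiftB_mem (R := R)) [] (replicate n symM ++ t)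

theorem cb_moves_to_end (a : α) (s : List α) :
    cb a :: s.map ca ++ [symE] ⇝* s.map ca ++ [ca a, symE] := by
  induction s with
  | nil => exact .single (by simpa using step_of_mem (shiftE_mem (R := R) a) [] [])
  | cons x s ih =>
    refine ReflTransGen.head (by simpa using step_of_mem (shiftD_mem x a) [] _) ?_
    simpa using reflTransGen_step_context ih [ca x] []

theorem rotate_letter (a : α) (s : List α) :
    symM :: symV :: (a :: s).map ca ++ [symE] ⇝* symV :: (s ++ [a]).map ca ++ [symE] := by
  refine ReflTransGen.head (by simpa using step_of_mem (shiftC_mem a) [] _) ?_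
  simpa using reflTransGen_step_context (cb_moves_to_end (R := R) a s) [symV] []

theorem rotate_prefix (p s : List α) :
    symW :: replicate p.length symM ++ symV :: (p ++ s).map ca ++ [symE] ⇝*
      symW :: symV :: (s ++ p).map ca ++ [symE] := by
  induction p generalizing s with
  | nil => simpa using ReflTransGen.refl
  | cons a p ih =>
    have h := reflTransGen_step_context (rotate_letter (R := R) a (p ++ s))
      (symW :: replicate p.length symM) []
    simp only [map_cons, map_append, append_nil] at h
    refine (by simpa [replicate_succ'] using h : _ ⇝* _).trans ?_
    simpa using ih (s ++ [a])

theorem scan_letters (u z : List α) :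
    symL :: (u ++ z).map ca ⇝* u.map cc ++ symL :: z.map ca := by
  induction u with
  | nil => exact .refl
  | cons a u ih =>
    refine ReflTransGen.head (by simpa using step_of_mem (shiftG_mem a) [] _) ?_
    simpa using reflTransGen_step_context ih [cc a] []

theorem return_letters (u : List α) : u.map cc ++ [symD] ⇝* symD :: u.map ca := by
  induction u with
  | nil => exact .refl
  | cons c u ih =>
    refine (by simpa using reflTransGen_step_context ih [cc c] [] : _ ⇝* _).tail ?_
    simpa using step_of_mem (shiftI_mem c) [] _

theorem encode_reduces_to_rotation {p : List α} (hp : p.length ≤ lenSRS R - 1) (y : List α) :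
    TransGen (Step (shiftSRS R)) (encode (p ++ y)) (symW :: symV :: (y ++ p).map ca ++ [symE]) := by
  have hA := step_of_mem (shiftA_mem (R := R)) [] ((p ++ y).map ca ++ [symE])
  have hM := reflTransGen_step_context
    (replicate_symM_reduce (R := R) hp (symV :: (p ++ y).map ca ++ [symE])) [symW] []
  exact TransGen.head' (by simpa [encode] using hA)
    ((by simpa using hM : _ ⇝* _).trans (rotate_prefix p y))

theorem rotation_reduces {l r : List α} (hm : (l, r) ∈ R) (u v : List α) :
    symW :: symV :: (u ++ l ++ v).map ca ++ [symE] ⇝* encode (u ++ r ++ v) := by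
  have hF := step_of_mem (shiftF_mem (R := R)) [] ((u ++ l ++ v).map ca ++ [symE])
  have hL := reflTransGen_step_context (scan_letters (R := R) u (l ++ v)) [symR] [symE]
  have hH := step_of_mem (shiftH_mem (R := R) hm) (symR :: u.map cc) (v.map ca ++ [symE])
  have hD :=
    reflTransGen_step_context (return_letters (R := R) u) [symR] ((r ++ v).map ca ++ [symE])
  have hJ := step_of_mem (shiftJ_mem (R := R)) [] ((u ++ r ++ v).map ca ++ [symE])
  simp only [nil_append, append_assoc, cons_append, map_append] at *
  exact ((((ReflTransGen.single hF).trans hL).tail hH).trans hD).tail (by simpa [encode] using hJ)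

theorem encode_reduces {l r p y u v : List α} (hm : (l, r) ∈ R)
    (hp : p.length ≤ lenSRS R - 1) (hy : y ++ p = u ++ l ++ v) :
    TransGen (Step (shiftSRS R)) (encode (p ++ y)) (encode (u ++ r ++ v)) :=
  (encode_reduces_to_rotation hp y).trans_left (hy ▸ rotation_reduces hm u v)

theorem length_le_lenSRS (hfin : R.Finite) {l r : List α} (hm : (l, r) ∈ R) :
    l.length ≤ lenSRS R :=
  le_csSup (hfin.image _).bddAbove ⟨(l, r), hm, rfl⟩

/-- Rotating `x` by fewer than `|l|` letters brings an occurrence of `l` into one piece; this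
is why `N = lenSRS R - 1` markers suffice. -/
theorem cycleStep_simulated (hfin : R.Finite) {l r w x : List α} (hm : (l, r) ∈ R)
    (hx : Sim (l ++ w) x) :
    ∃ x', TransGen (Step (shiftSRS R)) (encode x) (encode x') ∧ Sim (r ++ w) x' := by
  obtain ⟨w₁, w₂, h, rfl⟩ := hx
  rcases List.append_eq_append_iff.1 h with ⟨z, rfl, rfl⟩ | ⟨l₂, rfl, rfl⟩
  · refine ⟨w₂ ++ r ++ z, ?_, by simpa using sim_append_comm (r ++ z) w₂⟩
    simpa using encode_reduces (p := []) (y := w₂ ++ (l ++ z)) hm (by simp) (by simp)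
  · rcases eq_nil_or_concat w₁ with rfl | ⟨w₀, a, rfl⟩
    · refine ⟨r ++ w, ?_, sim_refl _⟩
      simpa using encode_reduces (p := []) (y := l₂ ++ w) (u := []) (v := w) hm (by simp) (by simp)
    · have hlen := length_le_lenSRS hfin hm
      simp only [concat_eq_append, length_append, length_singleton] at hlen
      refine ⟨w ++ r ++ [], ?_, by simpa using sim_append_comm r w⟩
      simpa using encode_reduces (p := l₂) (y := w ++ (w₀ ++ [a])) (u := w) (v := []) hm
        (by omega) (by simp)

theorem terminating_cycleStep_of_terminating_shift (hfin : R.Finite)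
    (h : Terminating (Step (shiftSRS R))) : Terminating (CycleStep R) := by
  refine h.transGen.of_simulation (fun a x => ∃ p, Sim a p ∧ x = encode p)
    (fun a => ⟨_, a, sim_refl a, rfl⟩) ?_
  rintro a b _ ⟨l, r, w, hm, hla, hrb⟩ ⟨p, hap, rfl⟩
  obtain ⟨x', hx', hrx'⟩ := cycleStep_simulated hfin hm (hla.trans hap)
  exact ⟨encode x', hx', x', hrb.symm.trans hrx', rfl⟩

end Soundness

section Parsing

open ShiftSym

variable {α : Type*}

/-- The type of a symbol boundary: every symbol of `shift R` is read as an arrow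
`inTy y → outTy y`, and a well-typed segment is a partially processed cycle. -/
inductive SymTy
  | start | marks | scan | body | closed
  deriving DecidableEq

def inTy : ShiftSym α → SymTy
  | symB | symW | symR => .start
  | symM | symV => .marks
  | symL | symD | cc _ => .scan
  | ca _ | cb _ | symE => .body

def outTy : ShiftSym α → SymTy
  | symW | symM => .marks
  | symR | cc _ => .scan
  | symB | symV | symL | symD | ca _ | cb _ => .body
  | symE => .closed

def frontLetters : ShiftSym α → List α
  | ca a | cc a => [a]
  | _ => []

def backLetters : ShiftSym α → List α
  | cb a => [a]
  | _ => []

theorem inTy_ne_closed (y : ShiftSym α) : inTy y ≠ .closed := by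
  cases y <;> simp [inTy]

/-- State of reading a string of `shift R` from the left: the words of the finished segments, and
the letters of the current one, split into `front` (from `Σ_A` and `Σ_C`) and `back` (from `Σ_B`,
latest first). The `Σ_B` letters have already been rotated past the others, so the current cyclic
word is `back ++ front`. -/
structure ParseState (α : Type*) where
  words : List (List α)
  front : List α
  back : List α
  ty : SymTy

namespace ParseState

def current (s : ParseState α) : List α := s.back ++ s.front

def output (s : ParseState α) : List (List α) := s.words ++ [s.current]

/-- `closed` is no input type, so the first symbol opens a new segment. -/
def init : ParseState α := ⟨[], [], [], .closed⟩

def feed (s : ParseState α) (y : ShiftSym α) : ParseState α :=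
  if s.ty = inTy y then ⟨s.words, s.front ++ frontLetters y, backLetters y ++ s.back, outTy y⟩
  else ⟨s.output, frontLetters y, backLetters y, outTy y⟩

def run (s : ParseState α) (x : List (ShiftSym α)) : ParseState α := x.foldl feed s

@[simp] theorem run_nil (s : ParseState α) : s.run [] = s := rfl

@[simp] theorem run_cons (s : ParseState α) (y : ShiftSym α) (x : List (ShiftSym α)) :
    s.run (y :: x) = (s.feed y).run x := rfl

theorem run_append (s : ParseState α) (x y : List (ShiftSym α)) :
    s.run (x ++ y) = (s.run x).run y := List.foldl_append ..

theorem ty_feed (s : ParseState α) (y : ShiftSym α) : (s.feed y).ty = outTy y := by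
  unfold feed; split_ifs <;> rfl

theorem words_feed (s : ParseState α) (y : ShiftSym α) :
    (s.feed y).words = if s.ty = inTy y then s.words else s.output := by
  unfold feed; split_ifs <;> rfl

theorem length_words_feed (s : ParseState α) (y : ShiftSym α) :
    (s.feed y).words.length = s.words.length + if s.ty = inTy y then 0 else 1 := by
  rw [words_feed]; split_ifs <;> simp [output]

theorem current_feed (s : ParseState α) (y : ShiftSym α) :
    (s.feed y).current =
      backLetters y ++ (if s.ty = inTy y then s.current else []) ++ frontLetters y := by
  unfold feed current; split_ifs <;> simp

theorem run_rel {P : ParseState α → ParseState α → Prop}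
    (hP : ∀ {s₁ s₂}, P s₁ s₂ → ∀ y : ShiftSym α, P (s₁.feed y) (s₂.feed y))
    {s₁ s₂ : ParseState α} (h : P s₁ s₂) (x : List (ShiftSym α)) : P (s₁.run x) (s₂.run x) := by
  induction x generalizing s₁ s₂ with
  | nil => exact h
  | cons y x ih => exact ih (hP h y)

theorem run_replicate_symM {s : ParseState α} (hs : s.ty = .marks) (n : ℕ) :
    s.run (List.replicate n symM) = s := by
  induction n with
  | zero => rfl
  | succ n ih =>
    have : s.feed symM = s := by cases s; simp_all [feed, inTy, outTy, frontLetters, backLetters]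
    rw [List.replicate_succ, run_cons, this, ih]

theorem run_map_ca {s : ParseState α} (hs : s.ty = .body) (p : List α) :
    s.run (p.map ca) = { s with front := s.front ++ p } := by
  induction p generalizing s with
  | nil => simp
  | cons a p ih =>
    rw [List.map_cons, run_cons, ih (by rw [ty_feed]; rfl)]
    cases s; simp_all [feed, inTy, outTy, frontLetters, backLetters]

def Blank (s : ParseState α) : Prop :=
  s.ty = .start ∨ s.ty = .marks → s.front = [] ∧ s.back = []

theorem blank_init : (init : ParseState α).Blank := by simp [Blank, init]

theorem Blank.feed {s : ParseState α} (hs : s.Blank) (y : ShiftSym α) : (s.feed y).Blank := by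
  unfold Blank at *
  by_cases h : s.ty = inTy y <;> cases y <;> simp_all [ParseState.feed, inTy, outTy,
    frontLetters, backLetters]

theorem Blank.run {s : ParseState α} (hs : s.Blank) (x : List (ShiftSym α)) : (s.run x).Blank := by
  induction x generalizing s with
  | nil => exact hs
  | cons y x ih => exact ih (hs.feed y)

end ParseState

def decode (x : List (ShiftSym α)) : List (List α) := (ParseState.init.run x).output

end Parsing

section Decoding

open ShiftSym List ParseState

variable {α : Type*} {R : Set (List α × List α)}

def hRules (R : Set (List α × List α)) : Set (List (ShiftSym α) × List (ShiftSym α)) :=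
  (fun p => (symL :: p.1.map ca, symD :: p.2.map ca)) '' R

def OneCycle (R : Set (List α × List α)) (ws₁ ws₂ : List (List α)) : Prop :=
  Forall₂ (fun a b => Sim a b ∨ CycleStep R a b) ws₁ ws₂ ∧
    ∃ j < ws₁.length, CycleStep R (ws₁.getD j default) (ws₂.getD j default)

theorem forall₂_sim_append {ws₁ ws₂ : List (List α)} {c₁ c₂ : List α}
    (hw : Forall₂ Sim ws₁ ws₂) (hc : Sim c₁ c₂) : Forall₂ Sim (ws₁ ++ [c₁]) (ws₂ ++ [c₂]) :=
  rel_append hw (.cons hc .nil)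

theorem oneCycle_append_of_cycleStep {ws₁ ws₂ : List (List α)} {c₁ c₂ : List α}
    (hw : Forall₂ Sim ws₁ ws₂) (hc : CycleStep R c₁ c₂) :
    OneCycle R (ws₁ ++ [c₁]) (ws₂ ++ [c₂]) := by
  refine ⟨rel_append (hw.imp fun _ _ => Or.inl) (.cons (Or.inr hc) .nil), ws₁.length, by simp, ?_⟩
  simpa [getD_append_right, hw.length_eq] using hc

theorem OneCycle.append {ws₁ ws₂ : List (List α)} {c₁ c₂ : List α} (h : OneCycle R ws₁ ws₂)
    (hc : Sim c₁ c₂) : OneCycle R (ws₁ ++ [c₁]) (ws₂ ++ [c₂]) := by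
  obtain ⟨hw, j, hj, hC⟩ := h
  refine ⟨rel_append hw (.cons (Or.inl hc) .nil), j, by simp; omega, ?_⟩
  rwa [getD_append _ _ _ _ hj, getD_append _ _ _ _ (hw.length_eq ▸ hj)]

/-- After `E` (type `closed`) a segment is complete, and only its rotation class matters. -/
def AgreeWith (W : List (List α) → List (List α) → Prop) (s₁ s₂ : ParseState α) : Prop :=
  s₁.ty = s₂.ty ∧ W s₁.words s₂.words ∧
    (s₁.current = s₂.current ∨ s₁.ty = .closed ∧ Sim s₁.current s₂.current)

section AgreeWith

variable {W : List (List α) → List (List α) → Prop}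

theorem AgreeWith.feed
    (hW : ∀ {ws₁ ws₂ c₁ c₂}, W ws₁ ws₂ → Sim c₁ c₂ → W (ws₁ ++ [c₁]) (ws₂ ++ [c₂]))
    {s₁ s₂ : ParseState α} (h : AgreeWith W s₁ s₂) (y : ShiftSym α) :
    AgreeWith W (s₁.feed y) (s₂.feed y) := by
  obtain ⟨hty, hw, hc⟩ := h
  have hsim : Sim s₁.current s₂.current := hc.elim (· ▸ sim_refl _) And.right
  refine ⟨by simp only [ty_feed], ?_, Or.inl ?_⟩
  · rw [words_feed, words_feed, hty]
    split_ifs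
    exacts [hw, hW hw hsim]
  · rw [current_feed, current_feed, hty]
    split_ifs with hb
    · rw [hc.resolve_right fun h => inTy_ne_closed y (hb ▸ hty ▸ h.1)]
    · rfl

theorem AgreeWith.output
    (hW : ∀ {ws₁ ws₂ c₁ c₂}, W ws₁ ws₂ → Sim c₁ c₂ → W (ws₁ ++ [c₁]) (ws₂ ++ [c₂]))
    {s₁ s₂ : ParseState α} (h : AgreeWith W s₁ s₂) :
    W s₁.output s₂.output :=
  hW h.2.1 (h.2.2.elim (· ▸ sim_refl _) And.right)

end AgreeWith

theorem agreeWith_of_eq {s₁ s₂ : ParseState α} (hty : s₁.ty = s₂.ty)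
    (hw : s₁.words = s₂.words) (hc : s₁.current = s₂.current) :
    AgreeWith (Forall₂ Sim) s₁ s₂ :=
  ⟨hty, hw ▸ forall₂_refl _, Or.inl hc⟩

/-- Relates the reading after an `M` that opens a segment to the reading with that `M` deleted
(rule `shiftB`). -/
def DropMarker (s₁ s₂ : ParseState α) : Prop :=
  s₂.ty ≠ .marks ∧ s₁ = ⟨s₂.output, [], [], .marks⟩

def MoreWords (s₁ s₂ : ParseState α) : Prop :=
  s₁.ty = s₂.ty ∧ s₂.words.length < s₁.words.length

def Related (s₁ s₂ : ParseState α) : Prop :=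
  AgreeWith (Forall₂ Sim) s₁ s₂ ∨ DropMarker s₁ s₂ ∨ MoreWords s₁ s₂

theorem MoreWords.feed {s₁ s₂ : ParseState α} (h : MoreWords s₁ s₂) (y : ShiftSym α) :
    MoreWords (s₁.feed y) (s₂.feed y) := by
  obtain ⟨hty, hlen⟩ := h
  refine ⟨by simp only [ty_feed], ?_⟩
  rw [length_words_feed, length_words_feed, hty]
  omega

theorem DropMarker.feed {s₁ s₂ : ParseState α} (h : DropMarker s₁ s₂) (y : ShiftSym α) :
    Related (s₁.feed y) (s₂.feed y) := by
  obtain ⟨hne, rfl⟩ := h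
  by_cases hy : inTy y = .marks
  · refine Or.inl (agreeWith_of_eq ?_ ?_ ?_) <;> simp [ParseState.feed, hy, hne]
  · refine Or.inr (Or.inr ⟨by simp only [ty_feed], ?_⟩)
    rw [length_words_feed, length_words_feed, if_neg (Ne.symm hy)]
    split_ifs <;> simp [ParseState.output]

theorem Related.feed {s₁ s₂ : ParseState α} (h : Related s₁ s₂) (y : ShiftSym α) :
    Related (s₁.feed y) (s₂.feed y) := by
  rcases h with h | h | h
  · exact Or.inl (h.feed forall₂_sim_append y)
  · exact h.feed y
  · exact Or.inr (Or.inr (h.feed y))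

theorem Related.output {s₁ s₂ : ParseState α} (h : Related s₁ s₂) :
    Forall₂ Sim s₁.output s₂.output ∨ s₂.output.length < s₁.output.length := by
  rcases h with h | ⟨-, rfl⟩ | ⟨-, hlen⟩
  · exact Or.inl (h.output forall₂_sim_append)
  · exact Or.inr (by simp [ParseState.output])
  · exact Or.inr (by simpa [ParseState.output] using hlen)

def RuleAhead (R : Set (List α × List α)) (s₁ s₂ : ParseState α) : Prop :=
  s₁.ty = s₂.ty ∧ Forall₂ Sim s₁.words s₂.words ∧ Step R s₁.current s₂.current

def HRelated (R : Set (List α × List α)) (s₁ s₂ : ParseState α) : Prop :=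
  RuleAhead R s₁ s₂ ∨ AgreeWith (OneCycle R) s₁ s₂

theorem RuleAhead.feed {s₁ s₂ : ParseState α} (h : RuleAhead R s₁ s₂) (y : ShiftSym α) :
    HRelated R (s₁.feed y) (s₂.feed y) := by
  obtain ⟨hty, hw, hst⟩ := h
  by_cases hb : s₂.ty = inTy y
  · refine Or.inl ⟨by simp only [ty_feed], ?_, ?_⟩
    · rwa [words_feed, words_feed, hty, if_pos hb, if_pos hb]
    · rw [current_feed, current_feed, hty, if_pos hb, if_pos hb]
      exact hst.append_context _ _
  · refine Or.inr ⟨by simp only [ty_feed], ?_, Or.inl ?_⟩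
    · rw [words_feed, words_feed, hty, if_neg hb, if_neg hb]
      exact oneCycle_append_of_cycleStep hw hst.cycleStep
    · rw [current_feed, current_feed, hty, if_neg hb, if_neg hb]

theorem HRelated.feed {s₁ s₂ : ParseState α} (h : HRelated R s₁ s₂) (y : ShiftSym α) :
    HRelated R (s₁.feed y) (s₂.feed y) :=
  h.elim (·.feed y) fun h => Or.inr (h.feed OneCycle.append y)

theorem HRelated.output {s₁ s₂ : ParseState α} (h : HRelated R s₁ s₂) :
    OneCycle R s₁.output s₂.output :=
  h.elim (fun ⟨_, hw, hst⟩ => oneCycle_append_of_cycleStep hw hst.cycleStep)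
    (·.output OneCycle.append)

section RuleSites

attribute [local simp] inTy outTy frontLetters backLetters

theorem related_run_of_mem {s : ParseState α} (hs : s.Blank) {l r : List (ShiftSym α)}
    (hm : (l, r) ∈ shiftSRS R) (hH : (l, r) ∉ hRules R) : Related (s.run l) (s.run r) := by
  rcases hm with
    h | h | ⟨a, h⟩ | ⟨a, b, h⟩ | ⟨b, h⟩ | h | ⟨a, h⟩ | ⟨l', r', hm', h⟩ | ⟨c, h⟩ | h <;>
    obtain ⟨rfl, rfl⟩ := Prod.mk.injEq _ _ _ _ ▸ h
  · simp only [cons_append, run_cons, run_append, run_nil]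
    rw [run_replicate_symM (ty_feed _ _)]
    refine Or.inl (agreeWith_of_eq ?_ ?_ ?_) <;> by_cases hst : s.ty = .start <;>
      simp [ParseState.feed, ParseState.current, hst]
  · by_cases hst : s.ty = .marks
    · refine Or.inl (agreeWith_of_eq ?_ ?_ ?_) <;>
        simp [ParseState.feed, ParseState.current, hst]
    · refine Or.inr (Or.inl ⟨hst, ?_⟩)
      simp [ParseState.feed, hst]
  · by_cases hst : s.ty = .marks
    · obtain ⟨hf, hb⟩ := hs (Or.inr hst)
      refine Or.inl (agreeWith_of_eq ?_ ?_ ?_) <;>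
        simp [ParseState.feed, ParseState.current, hst, hf, hb]
    · refine Or.inl (agreeWith_of_eq ?_ ?_ ?_) <;>
        simp [ParseState.feed, ParseState.current, hst]
  · refine Or.inl (agreeWith_of_eq ?_ ?_ ?_) <;> by_cases hst : s.ty = .body <;>
      simp [ParseState.feed, ParseState.current, hst]
  · refine Or.inl ⟨by simp [ty_feed], ?_, Or.inr ⟨by simp [ty_feed], ?_⟩⟩
    · simp only [run_cons, run_nil, words_feed, ty_feed, inTy, outTy, if_true]
      exact forall₂_refl _
    · simp only [run_cons, run_nil, current_feed, ty_feed]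
      by_cases hst : s.ty = .body
      · simpa [hst] using sim_append_comm [b] s.current
      · simpa [hst] using sim_refl [b]
  · refine Or.inl (agreeWith_of_eq ?_ ?_ ?_) <;> by_cases hst : s.ty = .start <;>
      simp [ParseState.feed, ParseState.current, hst]
  · refine Or.inl (agreeWith_of_eq ?_ ?_ ?_) <;> by_cases hst : s.ty = .scan <;>
      simp [ParseState.feed, ParseState.current, hst]
  · exact absurd ⟨(l', r'), hm', rfl⟩ hH
  · refine Or.inl (agreeWith_of_eq ?_ ?_ ?_) <;> by_cases hst : s.ty = .scan <;>
      simp [ParseState.feed, ParseState.current, hst]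
  · refine Or.inl (agreeWith_of_eq ?_ ?_ ?_) <;> by_cases hst : s.ty = .start <;>
      simp [ParseState.feed, ParseState.current, hst]

theorem ruleAhead_run_of_mem {s : ParseState α} {l r : List (ShiftSym α)}
    (hm : (l, r) ∈ hRules R) : RuleAhead R (s.run l) (s.run r) := by
  obtain ⟨⟨l, r⟩, hm, h⟩ := hm
  obtain ⟨rfl, rfl⟩ := Prod.mk.injEq _ _ _ _ ▸ h
  rw [run_cons, run_cons, run_map_ca (ty_feed _ _), run_map_ca (ty_feed _ _)]
  refine ⟨rfl, (rfl : (s.feed symL).words = (s.feed symD).words) ▸ forall₂_refl _, ?_⟩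
  by_cases hst : s.ty = .scan <;>
    simp [ParseState.feed, ParseState.current, hst]
  · simpa using step_of_mem hm (s.back ++ s.front) []
  · simpa using step_of_mem hm [] []

end RuleSites

theorem decode_of_step_diff {x y : List (ShiftSym α)} (h : Step (shiftSRS R \ hRules R) x y) :
    Forall₂ Sim (decode x) (decode y) ∨ (decode y).length < (decode x).length := by
  obtain ⟨u, v, l, r, ⟨hm, hH⟩, rfl, rfl⟩ := h
  simp only [decode, run_append]
  exact (run_rel Related.feed (related_run_of_mem (blank_init.run u) hm hH) v).output

theorem decode_of_step_hRules {x y : List (ShiftSym α)} (h : Step (hRules R) x y) :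
    OneCycle R (decode x) (decode y) := by
  obtain ⟨u, v, l, r, hm, rfl, rfl⟩ := h
  simp only [decode, run_append]
  exact (run_rel (P := HRelated R) HRelated.feed (Or.inl (ruleAhead_run_of_mem hm)) v).output

end Decoding

section Weight

open ShiftSym List

variable {γ α : Type*} {R : Set (List α × List α)}

def pairCount (p q : γ → Bool) : List γ → ℕ
  | [] => 0
  | y :: t => (if p y then t.countP q else 0) + pairCount p q t

theorem pairCount_append (p q : γ → Bool) (x y : List γ) :
    pairCount p q (x ++ y) = pairCount p q x + x.countP p * y.countP q + pairCount p q y := by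
  induction x with
  | nil => simp [pairCount]
  | cons a x ih =>
    by_cases h : p a <;> simp [pairCount, ih, h]
    ring

theorem pairCount_replicate {p : γ → Bool} (q : γ → Bool) {a : γ} (h : p a = false) (n : ℕ) :
    pairCount p q (replicate n a) = 0 := by
  induction n with
  | zero => rfl
  | succ n ih => simp [replicate_succ, pairCount, h, ih]

/-- Every rule of `shift R` except `shiftH` decreases this vector lexicographically: `shiftJ` the
first entry, `shiftA` the second, `shiftB` and `shiftC` the third, `shiftF` the fourth, `shiftE`
the fifth, `shiftG` the sixth, `shiftI` the seventh and `shiftD` the last. -/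
def weight (x : List (ShiftSym α)) : ℕ ×ₗ ℕ ×ₗ ℕ ×ₗ ℕ ×ₗ ℕ ×ₗ ℕ ×ₗ ℕ ×ₗ ℕ :=
  toLex (x.countP (· matches symD), toLex (x.countP (· matches symB),
    toLex (x.countP (· matches symM), toLex (x.countP (· matches symW),
    toLex (x.countP (· matches cb _), toLex (pairCount (· matches symL) (· matches ca _ | cc _) x,
    toLex (pairCount (· matches cc _) (· matches symD) x,
      pairCount (· matches cb _) (· matches ca _) x)))))))

theorem weight_lt_of_mem {l r : List (ShiftSym α)} (h : (l, r) ∈ shiftSRS R \ hRules R)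
    (u v : List (ShiftSym α)) : weight (u ++ r ++ v) < weight (u ++ l ++ v) := by
  obtain ⟨hm, hH⟩ := h
  rcases hm with
    h | h | ⟨a, h⟩ | ⟨a, b, h⟩ | ⟨b, h⟩ | h | ⟨a, h⟩ | ⟨l', r', hm', h⟩ | ⟨c, h⟩ | h <;>
    obtain ⟨rfl, rfl⟩ := Prod.mk.injEq _ _ _ _ ▸ h
  case inr.inr.inr.inr.inr.inr.inr.inl => exact absurd ⟨(l', r'), hm', rfl⟩ hH
  all_goals simp [weight, Prod.Lex.toLex_lt_toLex, pairCount_append, pairCount, countP_append,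
    pairCount_replicate]

end Weight

section Completeness

open Filter

variable {α : Type*} {R : Set (List α × List α)}

theorem frequently_step_hRules {f : ℕ → List (ShiftSym α)}
    (hf : ∀ n, Step (shiftSRS R) (f n) (f (n + 1))) :
    ∃ᶠ n in atTop, Step (hRules R) (f n) (f (n + 1)) := by
  intro hev
  obtain ⟨N, hN⟩ := eventually_atTop.1 hev
  obtain ⟨n, hn⟩ := WellFounded.not_rel_apply_succ (r := (· < ·)) fun k => weight (f (N + k))
  obtain ⟨u, v, l, r, hm, hx, hy⟩ := hf (N + n)
  have hl : (l, r) ∉ hRules R := fun hl => hN (N + n) (by omega) ⟨u, v, l, r, hl, hx, hy⟩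
  exact hn (by simpa [hx, hy, ← add_assoc] using weight_lt_of_mem ⟨hm, hl⟩ u v)

theorem terminating_shift_of_terminating_cycleStep (h : Terminating (CycleStep R)) :
    Terminating (Step (shiftSRS R)) := by
  rintro ⟨f, hf⟩
  refine not_terminating_of_listwise (S := Sim) (fun hs hc => hc.sim_left hs)
    (w := fun n => decode (f n)) (fun n => ?_)
    ((frequently_step_hRules hf).mono fun n hn => (decode_of_step_hRules hn).2) h
  obtain ⟨u, v, l, r, hm, hx, hy⟩ := hf n
  by_cases hH : (l, r) ∈ hRules R
  · exact Or.inl (decode_of_step_hRules ⟨u, v, l, r, hH, hx, hy⟩).1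
  · exact (decode_of_step_diff ⟨u, v, l, r, ⟨hm, hH⟩, hx, hy⟩).imp_left (·.imp fun _ _ => Or.inl)

end Completeness

theorem shift_sound_and_complete_general {α : Type*} (R : Set (List α × List α))
    (hfin : R.Finite) :
    Terminating (Step (shiftSRS R)) ↔ Terminating (CycleStep R) :=
  ⟨terminating_cycleStep_of_terminating_shift hfin, terminating_shift_of_terminating_cycleStep⟩

/-- soundness and completeness of the transformation `shift`. -/
theorem shift_sound_and_complete {α : Type*} [Finite α] (R : Set (List α × List α))
    (hfin : R.Finite) (hne : ∀ p ∈ R, p.1 ≠ []) :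
    Terminating (Step (shiftSRS R)) ↔ Terminating (CycleStep R) :=
  shift_sound_and_complete_general R hfin

end CycleRewriting
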